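/- arXiv:2010.08672 — 4 statements merged into one kernel-verified Lean document; each statement's English description precedes it below -/
import Mathlib

section
/- Let n be an abundant number with divisor set D, and let p, m be primes greater than σ(n) + 1 not dividing n. Then the map sending a subset S of the divisors of mn to the subset obtained by replacing each divisor of the form m·d (d | n) with p·d is a bijection between the winning coalitions of the divisor voting system of mn and those of pn. In particular, the divisor voting systems of pn and mn have the same number of winning coalitions. -/
/-- The sum of divisors of `N`. -/
def sigma1 (N : ℕ) : ℕ := ∑ d ∈ N.divisors, d

/-- The quota of the divisor voting system of `N` (when `sigma1 N` is even). -/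
def quota (N : ℕ) : ℕ := sigma1 N / 2 + 1

/-- The winning coalitions of the divisor voting system of `N`. -/
def winning (N : ℕ) : Set (Finset ℕ) :=
  {S | S ⊆ N.divisors ∧ quota N ≤ ∑ x ∈ S, x}

/-!
A divisor of `q * n` (with `q` prime, `q ∤ n`) is either a divisor `d` of `n` or `q * d`, so a
coalition `S` splits into parts `A, B ⊆ divisors n` and weighs `∑ A + q * ∑ B`, with both sums at
most `σ(n)`. Since `q > σ(n) + 1`, the quota `(q + 1) σ(n) / 2 + 1` is reached exactly when
`(2 ∑ B, 2 ∑ A)` exceeds `(σ(n), σ(n))` lexicographically, a condition that does not involve `q`.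
Hence swapping `m` for `p` in the second part is a bijection of winning coalitions.
-/

lemma div_two_lt_add_mul_iff {σ q a b : ℕ} (hq : σ + 1 < q) (ha : a ≤ σ) (hb : b ≤ σ) :
    (q + 1) * σ / 2 < a + q * b ↔ σ < 2 * b ∨ σ = 2 * b ∧ σ < 2 * a := by
  rw [Nat.div_lt_iff_lt_mul two_pos]
  rcases lt_trichotomy σ (2 * b) with h | h | h
  · have : q * (σ + 1) ≤ q * (2 * b) := Nat.mul_le_mul_left q h
    constructor
    · exact fun _ => Or.inl h
    · intro _; nlinarith
  · subst h
    constructor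
    · intro hlt; right; constructor <;> nlinarith
    · rintro (h | ⟨-, h⟩) <;> nlinarith
  · have : q * (2 * b + 1) ≤ q * σ := Nat.mul_le_mul_left q h
    constructor
    · intro hlt; nlinarith
    · rintro (h' | ⟨h', -⟩) <;> omega

def ofParts (q : ℕ) (AB : Finset ℕ × Finset ℕ) : Finset ℕ :=
  AB.1 ∪ AB.2.image (q * ·)

def toParts (n q : ℕ) (S : Finset ℕ) : Finset ℕ × Finset ℕ :=
  (S.filter (· ∣ n), (S.filter (fun x => ¬ x ∣ n)).image (· / q))

def winningParts (n : ℕ) : Set (Finset ℕ × Finset ℕ) :=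
  {AB | AB.1 ⊆ n.divisors ∧ AB.2 ⊆ n.divisors ∧
    (sigma1 n < 2 * ∑ x ∈ AB.2, x ∨
      sigma1 n = 2 * ∑ x ∈ AB.2, x ∧ sigma1 n < 2 * ∑ x ∈ AB.1, x)}

section Parts

variable {n q : ℕ}

lemma divisors_prime_mul (hq : q.Prime) (n : ℕ) :
    (q * n).divisors = ofParts q (n.divisors, n.divisors) := by
  rw [Nat.divisors_mul, hq.divisors]
  ext x
  simp [ofParts, Finset.mem_mul]

lemma not_dvd_of_mem_image_mul (hqn : ¬ q ∣ n) {B : Finset ℕ} {x : ℕ}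
    (hx : x ∈ B.image (q * ·)) : ¬ x ∣ n := by
  obtain ⟨d, -, rfl⟩ := Finset.mem_image.mp hx
  exact fun h => hqn (dvd_of_mul_right_dvd h)

lemma sum_ofParts (hq : 0 < q) (hqn : ¬ q ∣ n) {A B : Finset ℕ} (hA : A ⊆ n.divisors) :
    ∑ x ∈ ofParts q (A, B), x = ∑ x ∈ A, x + q * ∑ x ∈ B, x := by
  have hdisj : Disjoint A (B.image (q * ·)) :=
    Finset.disjoint_right.mpr fun x hx hxA =>
      not_dvd_of_mem_image_mul hqn hx (Nat.dvd_of_mem_divisors (hA hxA))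
  rw [ofParts, Finset.sum_union hdisj,
    Finset.sum_image fun _ _ _ _ h => Nat.eq_of_mul_eq_mul_left hq h, Finset.mul_sum]

lemma sigma1_prime_mul (hq : q.Prime) (hqn : ¬ q ∣ n) :
    sigma1 (q * n) = (q + 1) * sigma1 n := by
  rw [sigma1, divisors_prime_mul hq, sum_ofParts hq.pos hqn subset_rfl, sigma1]
  ring

lemma ofParts_subset (hq : q.Prime) {A B : Finset ℕ} (hA : A ⊆ n.divisors) (hB : B ⊆ n.divisors) :
    ofParts q (A, B) ⊆ (q * n).divisors := by
  rw [divisors_prime_mul hq]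
  exact Finset.union_subset_union hA (Finset.image_subset_image hB)

lemma exists_mul_eq_of_mem_divisors_prime_mul (hq : q.Prime) {x : ℕ}
    (hx : x ∈ (q * n).divisors) (hxn : ¬ x ∣ n) : ∃ d ∈ n.divisors, q * d = x := by
  rw [divisors_prime_mul hq, ofParts, Finset.mem_union] at hx
  rcases hx with hx | hx
  · exact absurd (Nat.dvd_of_mem_divisors hx) hxn
  · exact Finset.mem_image.mp hx

lemma toParts_ofParts (hq : 0 < q) (hqn : ¬ q ∣ n) {A B : Finset ℕ} (hA : A ⊆ n.divisors) :
    toParts n q (ofParts q (A, B)) = (A, B) := by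
  have hA_dvd : ∀ x ∈ A, x ∣ n := fun x hx => Nat.dvd_of_mem_divisors (hA hx)
  have hA_not_not_dvd : ∀ x ∈ A, ¬ ¬ x ∣ n := fun x hx h => h (hA_dvd x hx)
  have hB_not_dvd : ∀ x ∈ B.image (q * ·), ¬ x ∣ n := fun x hx => not_dvd_of_mem_image_mul hqn hx
  simp only [toParts, ofParts, Finset.filter_union, Finset.filter_true_of_mem hA_dvd,
    Finset.filter_false_of_mem hB_not_dvd, Finset.filter_true_of_mem hB_not_dvd,
    Finset.filter_false_of_mem hA_not_not_dvd, Finset.union_empty, Finset.empty_union,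
    Finset.image_image, Function.comp_def, Nat.mul_div_cancel_left _ hq, Finset.image_id']

lemma ofParts_toParts (hq : q.Prime) {S : Finset ℕ} (hS : S ⊆ (q * n).divisors) :
    ofParts q (toParts n q S) = S := by
  have hmul_div : ∀ x ∈ S.filter (fun x => ¬ x ∣ n), q * (x / q) = x := by
    intro x hx
    rw [Finset.mem_filter] at hx
    obtain ⟨d, -, rfl⟩ := exists_mul_eq_of_mem_divisors_prime_mul hq (hS hx.1) hx.2
    rw [Nat.mul_div_cancel_left _ hq.pos]
  rw [ofParts, toParts, Finset.image_image, Function.comp_def, Finset.image_congr hmul_div,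
    Finset.image_id', Finset.filter_union_filter_not_eq]

lemma toParts_subset (hq : q.Prime) {S : Finset ℕ} (hS : S ⊆ (q * n).divisors) :
    (toParts n q S).1 ⊆ n.divisors ∧ (toParts n q S).2 ⊆ n.divisors := by
  constructor
  · intro x hx
    simp only [toParts, Finset.mem_filter] at hx
    exact Nat.mem_divisors.mpr ⟨hx.2, right_ne_zero_of_mul (Nat.mem_divisors.mp (hS hx.1)).2⟩
  · intro y hy
    obtain ⟨x, hx, rfl⟩ := Finset.mem_image.mp hy
    rw [Finset.mem_filter] at hx
    obtain ⟨d, hd, rfl⟩ := exists_mul_eq_of_mem_divisors_prime_mul hq (hS hx.1) hx.2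
    rwa [Nat.mul_div_cancel_left _ hq.pos]

lemma ofParts_mem_winning_iff (hq : q.Prime) (hqn : ¬ q ∣ n) (hqσ : sigma1 n + 1 < q)
    {A B : Finset ℕ} (hA : A ⊆ n.divisors) (hB : B ⊆ n.divisors) :
    ofParts q (A, B) ∈ winning (q * n) ↔ (A, B) ∈ winningParts n := by
  have hsum (C : Finset ℕ) (hC : C ⊆ n.divisors) : ∑ x ∈ C, x ≤ sigma1 n :=
    Finset.sum_le_sum_of_subset hC
  simp only [winning, winningParts, Set.mem_ofPred_eq, ofParts_subset hq hA hB, hA, hB,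
    true_and, quota, sigma1_prime_mul hq hqn, sum_ofParts hq.pos hqn hA, ← Nat.lt_iff_add_one_le]
  exact div_two_lt_add_mul_iff hqσ (hsum A hA) (hsum B hB)

lemma invOn_toParts_ofParts (hq : q.Prime) (hqn : ¬ q ∣ n) :
    Set.InvOn (toParts n q) (ofParts q) (winningParts n) (winning (q * n)) :=
  ⟨fun _ hAB => toParts_ofParts hq.pos hqn hAB.1, fun _ hS => ofParts_toParts hq hS.1⟩

lemma bijOn_ofParts (hq : q.Prime) (hqn : ¬ q ∣ n) (hqσ : sigma1 n + 1 < q) :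
    Set.BijOn (ofParts q) (winningParts n) (winning (q * n)) := by
  refine (invOn_toParts_ofParts hq hqn).bijOn ?_ ?_
  · rintro ⟨A, B⟩ hAB
    exact (ofParts_mem_winning_iff hq hqn hqσ hAB.1 hAB.2.1).mpr hAB
  · intro S hS
    obtain ⟨hA, hB⟩ := toParts_subset hq hS.1
    rw [← ofParts_mem_winning_iff hq hqn hqσ hA hB, ofParts_toParts hq hS.1]
    exact hS

end Parts

lemma coe_winning (N : ℕ) :
    (↑(N.divisors.powerset.filter (fun S => quota N ≤ ∑ x ∈ S, x)) : Set (Finset ℕ)) =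
      winning N := by
  ext S
  simp [winning]

theorem stmt_12_general (n p m : ℕ)
    (hp : p.Prime) (hm : m.Prime)
    (hpσ : sigma1 n + 1 < p) (hmσ : sigma1 n + 1 < m)
    (hpn : ¬ p ∣ n) (hmn : ¬ m ∣ n) :
    Set.BijOn
      (fun S : Finset ℕ =>
        S.filter (· ∣ n) ∪ (S.filter (fun x => ¬ x ∣ n)).image (fun x => p * (x / m)))
      (winning (m * n)) (winning (p * n)) ∧
    ((m * n).divisors.powerset.filter (fun S => quota (m * n) ≤ ∑ x ∈ S, x)).card =
      ((p * n).divisors.powerset.filter (fun S => quota (p * n) ≤ ∑ x ∈ S, x)).card := by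
  have hbij : Set.BijOn (ofParts p ∘ toParts n m) (winning (m * n)) (winning (p * n)) :=
    (bijOn_ofParts hp hpn hpσ).comp
      ((bijOn_ofParts hm hmn hmσ).symm (invOn_toParts_ofParts hm hmn).symm)
  constructor
  · simpa only [Function.comp_def, ofParts, toParts, Finset.image_image] using hbij
  · rw [← Set.ncard_coe_finset, ← Set.ncard_coe_finset, coe_winning, coe_winning]
    exact hbij.ncard_eq

theorem stmt_12 (n p m : ℕ) (habund : 2 * n < sigma1 n)
    (hp : p.Prime) (hm : m.Prime)
    (hpσ : sigma1 n + 1 < p) (hmσ : sigma1 n + 1 < m)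
    (hpn : ¬ p ∣ n) (hmn : ¬ m ∣ n) :
    Set.BijOn
      (fun S : Finset ℕ =>
        S.filter (· ∣ n) ∪ (S.filter (fun x => ¬ x ∣ n)).image (fun x => p * (x / m)))
      (winning (m * n)) (winning (p * n)) ∧
    ((m * n).divisors.powerset.filter (fun S => quota (m * n) ≤ ∑ x ∈ S, x)).card =
      ((p * n).divisors.powerset.filter (fun S => quota (p * n) ≤ ∑ x ∈ S, x)).card :=
  stmt_12_general n p m hp hm hpσ hmσ hpn hmn
end

section
/- For any positive integer C there exists K such that for all integers k ≥ K, with m = 2k - 1 and b = (k - C)/(2k² - k), one has ⌊1/(2b)⌋ = k + C - 1 and the identity (2⌊1/(2b)⌋ - m + 1)/(m + 1) = 1 - m·b holds. -/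
theorem floor_inv_two_mul_div_eq (k C : ℕ) (hk : 2 * C ^ 2 < k) :
    ⌊1 / (2 * (((k : ℝ) - C) / (2 * (k : ℝ) ^ 2 - k)))⌋ = (k : ℤ) + C - 1 := by
  -- The value is `k + C - 1 + (k + 2C² - 2C) / (2(k - C))`, and that fraction lies in `[0, 1)`
  -- exactly when `2C² < k`.
  have hCsq : (C : ℝ) ≤ C ^ 2 := by exact_mod_cast Nat.le_self_pow two_ne_zero C
  have hkR : 2 * (C : ℝ) ^ 2 < k := by exact_mod_cast hk
  have hCk : (C : ℝ) < k := by nlinarith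
  rw [one_div, mul_div_assoc', inv_div, Int.floor_eq_iff]
  push_cast
  constructor
  · rw [le_div_iff₀ (by linarith)]
    nlinarith
  · rw [div_lt_iff₀ (by linarith)]
    nlinarith

theorem two_mul_add_sub_div_eq_one_sub_mul (k c : ℝ) (hk : k ≠ 0) (hk' : 2 * k - 1 ≠ 0) :
    (2 * (k + c - 1) - (2 * k - 1) + 1) / ((2 * k - 1) + 1) =
      1 - (2 * k - 1) * ((k - c) / (2 * k ^ 2 - k)) := by
  -- Both sides equal `c / k`.
  have hden : 2 * k ^ 2 - k = k * (2 * k - 1) := by ring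
  rw [hden]
  field_simp
  ring

theorem stmt_14_general (C : ℕ) :
    ∃ K : ℕ, ∀ k : ℕ, K ≤ k → ∀ m : ℕ, m = 2 * k - 1 →
      ∀ b : ℝ, b = ((k : ℝ) - C) / (2 * (k : ℝ) ^ 2 - k) →
        ⌊1 / (2 * b)⌋ = (k : ℤ) + C - 1 ∧
        (2 * (⌊1 / (2 * b)⌋ : ℝ) - m + 1) / ((m : ℝ) + 1) = 1 - m * b := by
  refine ⟨2 * C ^ 2 + 1, fun k hk m hm b hb => ?_⟩
  subst hm hb
  have hfloor := floor_inv_two_mul_div_eq k C (by omega)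
  refine ⟨hfloor, ?_⟩
  have hk1 : (1 : ℝ) ≤ k := by exact_mod_cast (show 1 ≤ k by omega)
  rw [hfloor, Nat.cast_sub (by omega)]
  push_cast
  exact two_mul_add_sub_div_eq_one_sub_mul k C (by positivity) (by linarith)

theorem stmt_14 (C : ℕ) (hC : 0 < C) :
    ∃ K : ℕ, ∀ k : ℕ, K ≤ k → ∀ m : ℕ, m = 2 * k - 1 →
      ∀ b : ℝ, b = ((k : ℝ) - C) / (2 * (k : ℝ) ^ 2 - k) →
        ⌊1 / (2 * b)⌋ = (k : ℤ) + C - 1 ∧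
        (2 * (⌊1 / (2 * b)⌋ : ℝ) - m + 1) / ((m : ℝ) + 1) = 1 - m * b :=
  stmt_14_general C
end

section
/- For any positive integer C there exists K such that for all integers k ≥ K, with m = 2k and b = (k - C)/(2k² + k), one has ⌊1/(2b)⌋ = k + C and the identity (2⌊1/(2b)⌋ - m + 1)/(m + 1) = 1 - m·b holds. -/
/-!
Writing `b = (k - C) / (k (2k + 1))`, one has
`1 / (2b) = k + C + (k + 2C²) / (2(k - C))`, and the last term lies in `[0, 1)` exactly when
`k > 2C² + 2C`; this gives the floor. With `⌊1/(2b)⌋ = k + C` both sides of the identity equal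
`(2C + 1) / (2k + 1)`.
-/

lemma one_div_two_mul_div_eq (k C : ℝ) (hk : 0 < k) (hkC : C < k) :
    1 / (2 * ((k - C) / (2 * k ^ 2 + k))) = (2 * k ^ 2 + k) / (2 * (k - C)) := by
  have : 2 * k ^ 2 + k ≠ 0 := by positivity
  have : k - C ≠ 0 := by linarith
  field_simp

lemma floor_div_two_mul_sub_eq (k C : ℕ) (hk : 2 * C ^ 2 + 2 * C < k) :
    ⌊((2 * (k : ℝ) ^ 2 + k) / (2 * ((k : ℝ) - C)))⌋ = (k : ℤ) + C := by
  have hk' : (2 * C ^ 2 + 2 * C : ℝ) < k := by exact_mod_cast hk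
  have hden : (0 : ℝ) < 2 * ((k : ℝ) - C) := by nlinarith [Nat.cast_nonneg (α := ℝ) C]
  rw [Int.floor_eq_iff, le_div_iff₀ hden, div_lt_iff₀ hden]
  push_cast
  constructor <;> nlinarith

lemma two_mul_add_sub_div_eq_one_sub (k C : ℝ) (hk : 0 < k) :
    (2 * (k + C) - 2 * k + 1) / (2 * k + 1) = 1 - 2 * k * ((k - C) / (2 * k ^ 2 + k)) := by
  have : 2 * k + 1 ≠ 0 := by positivity
  have : 2 * k ^ 2 + k = k * (2 * k + 1) := by ring
  rw [this]
  field_simp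
  ring

theorem stmt_15_general (C : ℕ) :
    ∃ K : ℕ, ∀ k : ℕ, K ≤ k → ∀ m : ℕ, m = 2 * k →
      ∀ b : ℝ, b = ((k : ℝ) - C) / (2 * (k : ℝ) ^ 2 + k) →
        ⌊1 / (2 * b)⌋ = (k : ℤ) + C ∧
        (2 * (⌊1 / (2 * b)⌋ : ℝ) - m + 1) / ((m : ℝ) + 1) = 1 - m * b := by
  refine ⟨2 * C ^ 2 + 2 * C + 1, fun k hk m hm b hb => ?_⟩
  have hkC : 2 * C ^ 2 + 2 * C < k := by omega
  have hk_pos : (0 : ℝ) < k := by exact_mod_cast (by omega : 0 < k)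
  have hC_lt : (C : ℝ) < k := by exact_mod_cast (by nlinarith : C < k)
  have hfloor : ⌊1 / (2 * b)⌋ = (k : ℤ) + C := by
    rw [hb, one_div_two_mul_div_eq _ _ hk_pos hC_lt, floor_div_two_mul_sub_eq k C hkC]
  refine ⟨hfloor, ?_⟩
  rw [hfloor, hb, hm]
  push_cast
  exact two_mul_add_sub_div_eq_one_sub _ _ hk_pos

theorem stmt_15 (C : ℕ) (hC : 0 < C) :
    ∃ K : ℕ, ∀ k : ℕ, K ≤ k → ∀ m : ℕ, m = 2 * k →
      ∀ b : ℝ, b = ((k : ℝ) - C) / (2 * (k : ℝ) ^ 2 + k) →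
        ⌊1 / (2 * b)⌋ = (k : ℤ) + C ∧
        (2 * (⌊1 / (2 * b)⌋ : ℝ) - m + 1) / ((m : ℝ) + 1) = 1 - m * b :=
  stmt_15_general C
end

section
/- Suppose m = 2k - 1 and b ∈ (0, 1/m) with 1/(2b) ∉ ℤ satisfies (2⌊1/(2b)⌋ - m + 1)/(m + 1) = 1 - mb with 1 - mb ≠ b. Then there exists a positive integer C with b = (k - C)/(2k² - k). -/
/-!
With `m = 2k - 1` the fixed-point equation is linear in `b` once `F = ⌊1/(2b)⌋` is fixed, and solving
it gives `b = (k - C)/(2k² - k)` with `C = F - k + 1`. Then `b < 1/m = k/(2k² - k)` is exactly `C > 0`.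
-/

theorem eq_div_of_fixedPoint_eq {K : Type*} [Field K] [CharZero K] {k F b : K} (hk : k ≠ 0)
    (hm : 2 * k - 1 ≠ 0)
    (h : (2 * F - (2 * k - 1) + 1) / ((2 * k - 1) + 1) = 1 - (2 * k - 1) * b) :
    b = (k - (F - k + 1)) / (2 * k ^ 2 - k) := by
  have hden : 2 * k ^ 2 - k ≠ 0 := by
    rw [show 2 * k ^ 2 - k = k * (2 * k - 1) by ring]
    exact mul_ne_zero hk hm
  rw [show (2 * k - 1) + 1 = 2 * k by ring] at h
  field_simp at h ⊢
  linear_combination (1 / 2 : K) * h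

theorem pos_of_div_lt_one_div {K : Type*} [Field K] [LinearOrder K] [IsStrictOrderedRing K]
    {k C b : K} (hk : 0 < k) (hm : 0 < 2 * k - 1) (hb : b = (k - C) / (2 * k ^ 2 - k))
    (hlt : b < 1 / (2 * k - 1)) : 0 < C := by
  rw [hb, show 2 * k ^ 2 - k = k * (2 * k - 1) by ring, ← div_div,
    div_lt_div_iff_of_pos_right hm, div_lt_one hk] at hlt
  linarith

theorem stmt_16_general (k : ℕ) (hk : 0 < k) (m : ℕ) (hm : m = 2 * k - 1)
    (b : ℝ) (hb1 : b < 1 / m)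
    (hfix : (2 * (⌊1 / (2 * b)⌋ : ℝ) - m + 1) / ((m : ℝ) + 1) = 1 - m * b) :
    ∃ C : ℕ, 0 < C ∧ b = ((k : ℝ) - C) / (2 * (k : ℝ) ^ 2 - k) := by
  set F : ℤ := ⌊1 / (2 * b)⌋
  have hkR : (1 : ℝ) ≤ k := by exact_mod_cast hk
  have hmR : (m : ℝ) = 2 * k - 1 := by
    rw [hm, Nat.cast_sub (by omega), Nat.cast_mul, Nat.cast_ofNat, Nat.cast_one]
  rw [hmR] at hb1 hfix
  have hb := eq_div_of_fixedPoint_eq (by positivity) (by linarith) hfix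
  have hC : (0 : ℝ) < F - k + 1 := pos_of_div_lt_one_div (by positivity) (by linarith) hb hb1
  have hCZ : 0 < F - k + 1 := by exact_mod_cast hC
  refine ⟨(F - k + 1).toNat, by omega, ?_⟩
  rw [hb]
  congr 2
  exact_mod_cast (Int.toNat_of_nonneg hCZ.le).symm

theorem stmt_16 (k : ℕ) (hk : 0 < k) (m : ℕ) (hm : m = 2 * k - 1)
    (b : ℝ) (hb0 : 0 < b) (hb1 : b < 1 / m)
    (hirr : ¬ ∃ z : ℤ, 1 / (2 * b) = (z : ℝ))
    (hfix : (2 * (⌊1 / (2 * b)⌋ : ℝ) - m + 1) / ((m : ℝ) + 1) = 1 - m * b)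
    (hnontriv : 1 - (m : ℝ) * b ≠ b) :
    ∃ C : ℕ, 0 < C ∧ b = ((k : ℝ) - C) / (2 * (k : ℝ) ^ 2 - k) :=
  stmt_16_general k hk m hm b hb1 hfix
end
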